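/- arXiv:2207.10383 — 9 statements merged into one kernel-verified Lean document; each statement's English description precedes it below -/
import Mathlib

section
/- If C is an [n,k,d] locally recoverable code with locality b (every coordinate is recoverable from at most b other coordinates, i.e., every column of a generator matrix lies in the span of b designated other columns within its locality set of size b+1), then k - 1 + ⌊(k-1)/b⌋ ≤ n - d. -/
/-!
Collect whole locality blocks greedily while the columns collected have rank at most `k - 1`,
then top up with part of one more block until the rank is exactly `k - 1`. Every whole block
brings `b + 1` coordinates but at most `b` to the rank, so the collected set `S` has at least
`k - 1 + ⌊(k - 1)/b⌋` coordinates. As its columns do not span `F^k`, some nonzero message is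
orthogonal to all of them; its codeword vanishes on `S`, so `d ≤ n - |S|`.
-/

open Module Submodule Finset

section SetFinrank

variable {K V ι : Type*} [Field K] [AddCommGroup V] [Module K V]

theorem finrank_image_finset_le_card (v : ι → V) (S : Finset ι) :
    (v '' S).finrank K ≤ S.card := by
  classical
  rw [← coe_image]
  exact (finrank_span_finset_le_card _).trans card_image_le

variable [FiniteDimensional K V]

theorem Set.finrank_union_le (s t : Set V) : (s ∪ t).finrank K ≤ s.finrank K + t.finrank K := by
  rw [Set.finrank, Set.finrank, Set.finrank, span_union]
  exact finrank_add_le_finrank_add_finrank _ _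

theorem Set.finrank_insert_le (x : V) (s : Set V) : (insert x s).finrank K ≤ s.finrank K + 1 := by
  have hx : ({x} : Set V).finrank K ≤ 1 := by
    simpa using finrank_span_finset_le_card (R := K) ({x} : Finset V)
  rw [Set.insert_eq, add_comm]
  exact (Set.finrank_union_le _ _).trans (by gcongr)

theorem finrank_image_biUnion_le {α : Type*} [DecidableEq ι] (v : ι → V) (T : Finset α)
    (f : α → Finset ι) :
    (v '' (T.biUnion f : Set ι)).finrank K ≤ ∑ B ∈ T, (v '' (f B : Set ι)).finrank K := by
  classical
  induction T using Finset.induction_on with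
  | empty =>
    simp only [biUnion_empty, coe_empty, Set.image_empty, Set.finrank_empty, sum_empty, le_refl]
  | insert a T ha ih =>
    rw [biUnion_insert, sum_insert ha, coe_union, Set.image_union]
    exact (Set.finrank_union_le _ _).trans (by gcongr)

theorem exists_subset_finrank_union_image_eq [DecidableEq ι] (v : ι → V) (s : Set V)
    (B : Finset ι) {m : ℕ} (hs : s.finrank K ≤ m) (hB : m ≤ (s ∪ v '' B).finrank K) :
    ∃ B' ⊆ B, (s ∪ v '' B').finrank K = m := by
  induction B using Finset.induction_on with
  | empty =>
    refine ⟨∅, subset_refl _, ?_⟩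
    simp only [coe_empty, Set.image_empty, Set.union_empty] at hB ⊢
    omega
  | insert a B _ ih =>
    by_cases hm : m ≤ (s ∪ v '' B).finrank K
    · obtain ⟨B', hB'B, hB'⟩ := ih hm
      exact ⟨B', hB'B.trans (subset_insert a B), hB'⟩
    · refine ⟨insert a B, subset_refl _, le_antisymm ?_ hB⟩
      have := Set.finrank_insert_le (K := K) (v a) (s ∪ v '' B)
      rw [coe_insert, Set.image_insert_eq, Set.union_insert]
      omega

end SetFinrank

section Partition

variable {K V ι : Type*} [Field K] [AddCommGroup V] [Module K V] {P : Finset (Finset ι)}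

theorem pairwiseDisjoint_of_existsUnique_mem (hP : ∀ j, ∃! B, B ∈ P ∧ j ∈ B) :
    (P : Set (Finset ι)).PairwiseDisjoint id := by
  intro B₁ h₁ B₂ h₂ hne
  refine disjoint_left.2 fun j hj₁ hj₂ => hne ?_
  exact (hP j).unique ⟨h₁, hj₁⟩ ⟨h₂, hj₂⟩

variable [DecidableEq ι]

theorem card_biUnion_of_subset_of_existsUnique_mem {b : ℕ}
    (hP : ∀ j, ∃! B, B ∈ P ∧ j ∈ B) (hsize : ∀ B ∈ P, B.card = b + 1)
    {T : Finset (Finset ι)} (hTP : T ⊆ P) :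
    (T.biUnion id).card = T.card * (b + 1) := by
  rw [card_biUnion ((pairwiseDisjoint_of_existsUnique_mem hP).subset hTP)]
  exact sum_const_nat fun B hB => hsize B (hTP hB)

variable [FiniteDimensional K V]

theorem exists_mem_notMem_of_finrank_image_biUnion_lt (v : ι → V)
    (hP : ∀ j, ∃! B, B ∈ P ∧ j ∈ B) {T : Finset (Finset ι)}
    (hT : (v '' ↑(T.biUnion id)).finrank K < (Set.range v).finrank K) :
    ∃ B ∈ P, B ∉ T := by
  by_contra! hPT
  refine hT.not_ge (Submodule.finrank_mono (span_mono ?_))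
  rintro _ ⟨j, rfl⟩
  obtain ⟨B, ⟨hBP, hjB⟩, -⟩ := hP j
  exact ⟨j, mem_biUnion.2 ⟨B, hPT B hBP, hjB⟩, rfl⟩

theorem exists_finset_finrank_image_le_and_add_div_le_card (v : ι → V) {b m : ℕ}
    (hP : ∀ j, ∃! B, B ∈ P ∧ j ∈ B) (hsize : ∀ B ∈ P, B.card = b + 1)
    (hloc : ∀ B ∈ P, (v '' B).finrank K ≤ b) (hm : m ≤ (Set.range v).finrank K) :
    ∃ S : Finset ι, (v '' S).finrank K ≤ m ∧ m + m / b ≤ S.card := by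
  obtain ⟨T, hT, hTmax⟩ := exists_max_image
    {T ∈ P.powerset | (v '' ↑(T.biUnion id)).finrank K ≤ m} card
    ⟨∅, by simp [Set.finrank_empty]⟩
  rw [mem_filter, mem_powerset] at hT
  obtain ⟨hTP, hTm⟩ := hT
  set U := T.biUnion id
  have hUcard : U.card = T.card * b + T.card := by
    rw [card_biUnion_of_subset_of_existsUnique_mem hP hsize hTP, mul_add_one]
  have hUrk : (v '' U).finrank K ≤ T.card * b :=
    (finrank_image_biUnion_le v T id).trans
      (sum_le_card_nsmul _ _ _ fun B hB => hloc B (hTP hB))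
  rcases hTm.eq_or_lt with heq | hlt
  · have : m / b ≤ T.card := Nat.div_le_of_le_mul (by rw [mul_comm]; omega)
    exact ⟨U, hTm, by omega⟩
  obtain ⟨B, hBP, hBT⟩ := exists_mem_notMem_of_finrank_image_biUnion_lt v hP (hlt.trans_le hm)
  have hover : m < (v '' U ∪ v '' B).finrank K := by
    by_contra! h
    have := hTmax (insert B T) (by
      rw [mem_filter, mem_powerset, biUnion_insert, coe_union, Set.image_union, Set.union_comm]
      exact ⟨insert_subset hBP hTP, h⟩)
    rw [card_insert_of_notMem hBT] at this
    omega
  obtain ⟨B', hB'B, hB'⟩ := exists_subset_finrank_union_image_eq v (v '' U) B hTm hover.le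
  have hdisj : Disjoint U B' := (disjoint_biUnion_left _ _ _).2 fun C hC =>
    (pairwiseDisjoint_of_existsUnique_mem hP (hTP hC) hBP
      (ne_of_mem_of_not_mem hC hBT)).mono_right hB'B
  refine ⟨U ∪ B', by rw [coe_union, Set.image_union, hB'], ?_⟩
  have := Set.finrank_union_le (K := K) (v '' U) (v '' B')
  have := Set.finrank_union_le (K := K) (v '' U) (v '' B)
  have := finrank_image_finset_le_card (K := K) v B'
  have := hloc B hBP
  have : m / b < T.card + 1 := Nat.div_lt_of_lt_mul (by rw [mul_comm, add_one_mul]; omega)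
  rw [card_union_of_disjoint hdisj]
  omega

end Partition

theorem exists_ne_zero_forall_dotProduct_eq_zero {K κ ι : Type*} [Field K] [Fintype κ]
    [Finite ι] (w : ι → κ → K) (h : (Set.range w).finrank K < Fintype.card κ) :
    ∃ x ≠ 0, ∀ j, x ⬝ᵥ w j = 0 := by
  have hrange : finrank K (LinearMap.range (Matrix.of w).mulVecLin) < finrank K (κ → K) := by
    rwa [← Matrix.rank, Matrix.rank_eq_finrank_span_row, Module.finrank_fintype_fun_eq_card]
  obtain ⟨x, hx, hx0⟩ := (Submodule.ne_bot_iff _).mp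
    (LinearMap.ker_ne_bot_of_finrank_lt (f := (Matrix.of w).mulVecLin.rangeRestrict) hrange)
  refine ⟨x, hx0, fun j => ?_⟩
  rw [LinearMap.ker_rangeRestrict, LinearMap.mem_ker] at hx
  rw [dotProduct_comm]
  exact congrFun hx j

theorem hammingNorm_add_card_le_of_eq_zero {ι : Type*} [Fintype ι] {β : ι → Type*}
    [∀ i, Zero (β i)] [∀ i, DecidableEq (β i)] (x : ∀ i, β i) (S : Finset ι)
    (hS : ∀ i ∈ S, x i = 0) : hammingNorm x + S.card ≤ Fintype.card ι := by
  classical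
  calc hammingNorm x + S.card ≤ Sᶜ.card + S.card := by
        gcongr
        exact card_le_card fun i hi => mem_compl.2 fun hiS => (mem_filter.1 hi).2 (hS i hiS)
    _ = Fintype.card ι := card_compl_add_card S

theorem lrc_singleton_bound_general {F : Type*} [Field F] [DecidableEq F] {n k d b : ℕ}
    (hk : 1 ≤ k)
    (G : Matrix (Fin k) (Fin n) F)
    (hrank : G.rank = k)
    (hdist : ∀ x : Fin k → F, x ≠ 0 → d ≤ hammingNorm (Matrix.vecMul x G))
    (P : Finset (Finset (Fin n)))
    (hpart : ∀ j : Fin n, ∃! B, B ∈ P ∧ j ∈ B)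
    (hsize : ∀ B ∈ P, B.card = b + 1)
    (hloc : ∀ B ∈ P, Module.finrank F
      (Submodule.span F ((fun j : Fin n => fun i : Fin k => G i j) '' (B : Set (Fin n)))) ≤ b) :
    k - 1 + (k - 1) / b ≤ n - d := by
  have hcols : (Set.range G.col).finrank F = k := by
    rwa [Matrix.rank_eq_finrank_span_cols] at hrank
  obtain ⟨S, hSrk, hScard⟩ := exists_finset_finrank_image_le_and_add_div_le_card G.col
    hpart hsize hloc (m := k - 1) (by omega)
  obtain ⟨x, hx0, hxS⟩ :=
    exists_ne_zero_forall_dotProduct_eq_zero ((S : Set (Fin n)).domRestrict G.col)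
      (by rw [Set.range_domRestrict, Fintype.card_fin]; omega)
  have hwt := hammingNorm_add_card_le_of_eq_zero (Matrix.vecMul x G) S fun j hj => hxS ⟨j, hj⟩
  rw [Fintype.card_fin] at hwt
  have hd := hdist x hx0
  omega

/-- Singleton-type bound for locally recoverable codes with locality `b`:
if the coordinates of an `[n,k,d]` code (given by a rank-`k` generator matrix `G`, all
nonzero codewords of weight at least `d`) are partitioned into sets of size `b+1` on each
of which the corresponding columns of `G` have rank at most `b`, then
`k - 1 + ⌊(k-1)/b⌋ ≤ n - d`. -/
theorem lrc_singleton_bound {F : Type*} [Field F] [DecidableEq F] {n k d b : ℕ}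
    (hk : 1 ≤ k) (hb : 1 ≤ b)
    (G : Matrix (Fin k) (Fin n) F)
    (hrank : G.rank = k)
    (hdist : ∀ x : Fin k → F, x ≠ 0 → d ≤ hammingNorm (Matrix.vecMul x G))
    (P : Finset (Finset (Fin n)))
    (hpart : ∀ j : Fin n, ∃! B, B ∈ P ∧ j ∈ B)
    (hsize : ∀ B ∈ P, B.card = b + 1)
    (hloc : ∀ B ∈ P, Module.finrank F
      (Submodule.span F ((fun j : Fin n => fun i : Fin k => G i j) '' (B : Set (Fin n)))) ≤ b) :
    k - 1 + (k - 1) / b ≤ n - d :=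
  lrc_singleton_bound_general hk G hrank hdist P hpart hsize hloc
end

section
/- Let C be an [n,k,d,b,a,λ] hierarchical locally recoverable code with 2 ≤ λ ≤ b, and set ρ = b(a+λ)/(b+1) - (λ-1). Write k-1 = ⌊(k-1)/ρ⌋·ρ + k₁ with 0 ≤ k₁ < ρ. Then ⌊(k-1)/ρ⌋·(a+λ) + k₁ + ⌊k₁/b⌋ ≤ n - d. -/
/-!
Take the first `m = ⌊(k-1)/ρ⌋` local groups `A i`, then inside the next group the first
`t = ⌊k₁/b⌋` blocks `B i j`, and finally `r = k₁ mod b` further coordinates of the next block.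
The columns of `G` on this set `S` span a space of dimension at most `mρ + tb + r = k - 1 < k`,
so some nonzero message `x` has `xG` vanishing on `S`, and hence `d ≤ n - |S|`, where
`|S| = m(a+λ) + t(b+1) + r = m(a+λ) + k₁ + t`. That the group `A m` and the block `B m t`
exist follows from `k ≤ ℓρ` (the groups `A i` cover all columns) and `k₁ < ρ ≤ b(a+λ)/(b+1)`.
-/

open Function Module Submodule Finset

lemma Finset.exists_notMem_card_eq {β : Type*} [Fintype β] (i₀ : β) {q : ℕ}
    (hq : q < Fintype.card β) : ∃ I : Finset β, i₀ ∉ I ∧ #I = q := by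
  classical
  obtain ⟨I, hI, rfl⟩ := exists_subset_card_eq (s := univ.erase i₀) (n := q)
    (by rw [card_erase_of_mem (mem_univ _), card_univ]; omega)
  exact ⟨I, fun h => (mem_erase.1 (hI h)).1 rfl, rfl⟩

namespace Matrix

variable {F ι κ : Type*} [Field F] (G : Matrix ι κ F)

noncomputable def rankOn (S : Finset κ) : ℕ :=
  (G.col '' (S : Set κ)).finrank F

lemma rankOn_le_card (S : Finset κ) : G.rankOn S ≤ #S := by
  have : G.col '' (S : Set κ) = Set.range (fun j : S => G.col j) := Set.image_eq_range _ _
  rw [rankOn, this]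
  exact (finrank_range_le_card _).trans_eq (Fintype.card_coe S)

lemma rankOn_union_le [Fintype ι] [DecidableEq κ] (S T : Finset κ) :
    G.rankOn (S ∪ T) ≤ G.rankOn S + G.rankOn T := by
  rw [rankOn, coe_union, Set.image_union, Set.finrank, span_union]
  exact finrank_add_le_finrank_add_finrank _ _

lemma rankOn_biUnion_le [Fintype ι] [DecidableEq κ] {β : Type*} (I : Finset β)
    (P : β → Finset κ) {ρ : ℕ} (h : ∀ i ∈ I, G.rankOn (P i) ≤ ρ) :
    G.rankOn (I.biUnion P) ≤ #I * ρ := by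
  classical
  induction I using Finset.induction_on with
  | empty => simpa using G.rankOn_le_card ∅
  | insert a I ha ih =>
    rw [biUnion_insert, card_insert_of_notMem ha, add_one_mul, add_comm]
    exact (G.rankOn_union_le _ _).trans <| add_le_add (h a (mem_insert_self a I))
      (ih fun i hi => h i (mem_insert_of_mem hi))

lemma rank_eq_rankOn_univ [Fintype κ] : G.rank = G.rankOn univ := by
  rw [rank_eq_finrank_span_cols, rankOn, coe_univ, Set.image_univ, Set.finrank]

lemma rank_le_card_mul_of_cover [Fintype ι] [Fintype κ] [DecidableEq κ] {β : Type*} [Fintype β]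
    {A : β → Finset κ} (hcover : ∀ j, ∃ i, j ∈ A i) {ρ : ℕ} (hrank : ∀ i, G.rankOn (A i) ≤ ρ) :
    G.rank ≤ Fintype.card β * ρ := by
  have hunion : univ.biUnion A = univ := eq_univ_of_forall fun j => by simpa using hcover j
  rw [G.rank_eq_rankOn_univ, ← hunion]
  exact G.rankOn_biUnion_le univ A fun i _ => hrank i

lemma exists_ne_zero_vecMul_eq_zero_of_rankOn_lt [Fintype ι] {S : Finset κ}
    (h : G.rankOn S < Fintype.card ι) : ∃ x ≠ 0, ∀ j ∈ S, (x ᵥ* G) j = 0 := by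
  classical
  have hW : span F (G.col '' (S : Set κ)) < ⊤ :=
    lt_top_of_finrank_lt_finrank (by rwa [finrank_fintype_fun_eq_card])
  obtain ⟨f, hf0, hWf⟩ := exists_le_ker_of_lt_top _ hW
  set x : ι → F := fun i => f fun j => if i = j then 1 else 0
  have hf : ∀ v, f v = v ⬝ᵥ x := fun v => by
    simp only [LinearMap.pi_apply_eq_sum_univ f v, smul_eq_mul, dotProduct, x]
  refine ⟨x, fun hx => hf0 (LinearMap.ext fun v => by simp [hf, hx]), fun j hj => ?_⟩
  have : f (G.col j) = 0 := hWf (subset_span ⟨j, hj, rfl⟩)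
  rwa [hf, dotProduct_comm] at this

lemma add_card_le_of_rankOn_lt [Fintype ι] [Fintype κ] [DecidableEq F] {d : ℕ}
    (hdist : ∀ x : ι → F, x ≠ 0 → d ≤ hammingNorm (x ᵥ* G)) {S : Finset κ}
    (h : G.rankOn S < Fintype.card ι) : d + #S ≤ Fintype.card κ := by
  classical
  obtain ⟨x, hx0, hxS⟩ := G.exists_ne_zero_vecMul_eq_zero_of_rankOn_lt h
  have hsupp : ({j | (x ᵥ* G) j ≠ 0} : Finset κ) ⊆ Sᶜ := fun j hj =>
    mem_compl.2 fun hjS => (mem_filter.1 hj).2 (hxS j hjS)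
  have := (hdist x hx0).trans (card_le_card hsupp)
  rw [card_compl] at this
  have := S.card_le_univ
  omega

lemma exists_rankOn_le_of_hierarchy [Fintype ι] [DecidableEq κ] {β γ : Type*} [Fintype β]
    [Fintype γ] {A : β → Finset κ} {B : β → γ → Finset κ} {sA sB ρA ρB m t r : ℕ}
    (hAdisj : Pairwise (Disjoint on A)) (hAcard : ∀ i, #(A i) = sA)
    (hArank : ∀ i, G.rankOn (A i) ≤ ρA) (hBsub : ∀ i j, B i j ⊆ A i)
    (hBdisj : ∀ i, Pairwise (Disjoint on B i)) (hBcard : ∀ i j, #(B i j) = sB)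
    (hBrank : ∀ i j, G.rankOn (B i j) ≤ ρB)
    (hm : m < Fintype.card β) (ht : t < Fintype.card γ) (hr : r ≤ sB) :
    ∃ S : Finset κ, #S = m * sA + t * sB + r ∧ G.rankOn S ≤ m * ρA + t * ρB + r := by
  obtain ⟨i₀⟩ := Fintype.card_pos_iff.1 (m.zero_le.trans_lt hm)
  obtain ⟨j₀⟩ := Fintype.card_pos_iff.1 (t.zero_le.trans_lt ht)
  obtain ⟨I, hI, rfl⟩ := exists_notMem_card_eq i₀ hm
  obtain ⟨J, hJ, rfl⟩ := exists_notMem_card_eq j₀ ht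
  obtain ⟨R, hR, rfl⟩ := exists_subset_card_eq (hr.trans_eq (hBcard i₀ j₀).symm)
  have hJR : J.biUnion (B i₀) ∪ R ⊆ A i₀ :=
    union_subset (biUnion_subset.2 fun j _ => hBsub i₀ j) (hR.trans (hBsub i₀ j₀))
  have hdisj₁ : Disjoint (I.biUnion A) (J.biUnion (B i₀) ∪ R) :=
    ((disjoint_biUnion_left _ _ _).2 fun i hi =>
      hAdisj (ne_of_mem_of_not_mem hi hI)).mono_right hJR
  have hdisj₂ : Disjoint (J.biUnion (B i₀)) R :=
    ((disjoint_biUnion_left _ _ _).2 fun j hj =>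
      hBdisj i₀ (ne_of_mem_of_not_mem hj hJ)).mono_right hR
  refine ⟨I.biUnion A ∪ (J.biUnion (B i₀) ∪ R), ?_, ?_⟩
  · rw [card_union_of_disjoint hdisj₁, card_union_of_disjoint hdisj₂,
      card_biUnion fun i _ i' _ h => hAdisj h, card_biUnion fun j _ j' _ h => hBdisj i₀ h,
      sum_const_nat fun i _ => hAcard i, sum_const_nat fun j _ => hBcard i₀ j, add_assoc]
  · calc G.rankOn (I.biUnion A ∪ (J.biUnion (B i₀) ∪ R))
        ≤ G.rankOn (I.biUnion A) + (G.rankOn (J.biUnion (B i₀)) + G.rankOn R) :=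
          (G.rankOn_union_le _ _).trans (add_le_add le_rfl (G.rankOn_union_le _ _))
      _ ≤ #I * ρA + (#J * ρB + #R) :=
          add_le_add (G.rankOn_biUnion_le I A fun i _ => hArank i) <|
            add_le_add (G.rankOn_biUnion_le J (B i₀) fun j _ => hBrank i₀ j) (G.rankOn_le_card R)
      _ = #I * ρA + #J * ρB + #R := (add_assoc _ _ _).symm

end Matrix

theorem hlrc_singleton_bound_general {F : Type*} [Field F] [DecidableEq F]
    {n k d b a lam ℓ : ℕ}
    (hdvd2 : (b + 1) ∣ (a + lam))
    (G : Matrix (Fin k) (Fin n) F)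
    (hrank : G.rank = k)
    (hdist : ∀ x : Fin k → F, x ≠ 0 → d ≤ hammingNorm (Matrix.vecMul x G))
    (A : Fin ℓ → Finset (Fin n))
    (hAdisj : ∀ i i' : Fin ℓ, i ≠ i' → Disjoint (A i) (A i'))
    (hAcover : ∀ j : Fin n, ∃ i, j ∈ A i)
    (hAcard : ∀ i, (A i).card = a + lam)
    (B : Fin ℓ → Fin ((a + lam) / (b + 1)) → Finset (Fin n))
    (hBsub : ∀ i j, B i j ⊆ A i)
    (hBdisj : ∀ i, ∀ j j' : Fin ((a + lam) / (b + 1)), j ≠ j' → Disjoint (B i j) (B i j'))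
    (hBcard : ∀ i j, (B i j).card = b + 1)
    (hArank : ∀ i, Module.finrank F
      (Submodule.span F ((fun c : Fin n => fun r : Fin k => G r c) '' ((A i : Set (Fin n)))))
        ≤ b * (a + lam) / (b + 1) - (lam - 1))
    (hBrank : ∀ i j, Module.finrank F
      (Submodule.span F ((fun c : Fin n => fun r : Fin k => G r c) '' ((B i j : Set (Fin n)))))
        ≤ b) :
    ((k - 1) / (b * (a + lam) / (b + 1) - (lam - 1))) * (a + lam)
      + (k - 1) % (b * (a + lam) / (b + 1) - (lam - 1))
      + ((k - 1) % (b * (a + lam) / (b + 1) - (lam - 1))) / b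
      ≤ n - d := by
  set ρ := b * (a + lam) / (b + 1) - (lam - 1)
  obtain rfl | hk := Nat.eq_zero_or_pos k
  · simp
  obtain ⟨c, hc⟩ := hdvd2
  have hρc : ρ ≤ b * c := (Nat.sub_le _ _).trans_eq <| by
    rw [hc, mul_left_comm, Nat.mul_div_cancel_left _ b.succ_pos]
  have hkρ : k ≤ ℓ * ρ := by simpa [hrank] using G.rank_le_card_mul_of_cover hAcover hArank
  have hρ : 0 < ρ := Nat.pos_of_ne_zero fun h => by simp [h] at hkρ; omega
  have hb : 0 < b := Nat.pos_of_ne_zero fun h => by simp [h] at hρc; omega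
  set m := (k - 1) / ρ
  set k₁ := (k - 1) % ρ
  have hmρ : ρ * m + k₁ = k - 1 := Nat.div_add_mod _ _
  have htb : b * (k₁ / b) + k₁ % b = k₁ := Nat.div_add_mod _ _
  have hm : m < ℓ := (Nat.div_lt_iff_lt_mul hρ).2 (by omega)
  have ht : k₁ / b < c :=
    (Nat.div_lt_iff_lt_mul hb).2 ((Nat.mod_lt _ hρ).trans_le (hρc.trans_eq (mul_comm b c)))
  obtain ⟨S, hScard, hSrank⟩ := G.exists_rankOn_le_of_hierarchy hAdisj hAcard hArank hBsub hBdisj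
    hBcard hBrank (by simpa using hm) (by simpa [hc] using ht)
    ((Nat.mod_lt k₁ hb).le.trans b.le_succ)
  have hd := G.add_card_le_of_rankOn_lt hdist (hSrank.trans_lt (by
    rw [Fintype.card_fin, mul_comm m, mul_comm (k₁ / b)]
    omega))
  rw [Fintype.card_fin, hScard, mul_add_one, mul_comm (k₁ / b)] at hd
  omega

/-- Improved Singleton-type bound for `[n,k,d,b,a,λ]` hierarchical LRCs with
`2 ≤ λ ≤ b`. The code is given by a rank-`k` generator matrix `G` whose nonzero codewords
have weight at least `d`; the coordinates are partitioned into `ℓ` sets `A i` of size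
`a + λ`, each of which is further partitioned into sets `B i j` of size `b + 1`; the
columns indexed by each `A i` have rank at most `ρ = b(a+λ)/(b+1) - (λ-1)` and the columns
indexed by each `B i j` have rank at most `b`. Then
`⌊(k-1)/ρ⌋(a+λ) + k₁ + ⌊k₁/b⌋ ≤ n - d` where `k₁ = (k-1) mod ρ`. -/
theorem hlrc_singleton_bound {F : Type*} [Field F] [DecidableEq F]
    {n k d b a lam ℓ : ℕ}
    (hnk : k < n) (hlam2 : 2 ≤ lam) (hlamb : lam ≤ b)
    (hdvd1 : (a + lam) ∣ n) (hdvd2 : (b + 1) ∣ (a + lam))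
    (hl : n = (a + lam) * ℓ)
    (G : Matrix (Fin k) (Fin n) F)
    (hrank : G.rank = k)
    (hdist : ∀ x : Fin k → F, x ≠ 0 → d ≤ hammingNorm (Matrix.vecMul x G))
    (A : Fin ℓ → Finset (Fin n))
    (hAdisj : ∀ i i' : Fin ℓ, i ≠ i' → Disjoint (A i) (A i'))
    (hAcover : ∀ j : Fin n, ∃ i, j ∈ A i)
    (hAcard : ∀ i, (A i).card = a + lam)
    (B : Fin ℓ → Fin ((a + lam) / (b + 1)) → Finset (Fin n))
    (hBsub : ∀ i j, B i j ⊆ A i)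
    (hBdisj : ∀ i, ∀ j j' : Fin ((a + lam) / (b + 1)), j ≠ j' → Disjoint (B i j) (B i j'))
    (hBcover : ∀ i, ∀ x ∈ A i, ∃ j, x ∈ B i j)
    (hBcard : ∀ i j, (B i j).card = b + 1)
    (hArank : ∀ i, Module.finrank F
      (Submodule.span F ((fun c : Fin n => fun r : Fin k => G r c) '' ((A i : Set (Fin n)))))
        ≤ b * (a + lam) / (b + 1) - (lam - 1))
    (hBrank : ∀ i j, Module.finrank F
      (Submodule.span F ((fun c : Fin n => fun r : Fin k => G r c) '' ((B i j : Set (Fin n)))))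
        ≤ b) :
    ((k - 1) / (b * (a + lam) / (b + 1) - (lam - 1))) * (a + lam)
      + (k - 1) % (b * (a + lam) / (b + 1) - (lam - 1))
      + ((k - 1) % (b * (a + lam) / (b + 1) - (lam - 1))) / b
      ≤ n - d :=
  hlrc_singleton_bound_general hdvd2 G hrank hdist A hAdisj hAcover hAcard B hBsub hBdisj hBcard
    hArank hBrank
end

section
/- Let f, h ∈ F_q[X] be non-constant polynomials and t₀ ∈ F_q be such that f(h(X)) - t₀ splits into (deg f)(deg h) distinct linear factors over F_q. Then the set A₀ of roots of f(h(X)) - t₀ in F_q can be partitioned into deg f sets B₁,...,B_{deg f}, each of cardinality deg h, such that h is constant on each B_i with value c_i ∈ F_q, and c_i ≠ c_j for i ≠ j. -/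
/-!
Write `f(h(X)) - t₀ = g(h(X))` with `g = f - t₀`. Every root `x` of `g ∘ h` lies over the root
`h(x)` of `g`, so the `(deg f)(deg h)` roots fall into at most `deg g = deg f` fibres of `h`, each
of which has at most `deg h` points. Counting forces equality everywhere: `h` takes exactly
`deg f` distinct values on the roots, each exactly `deg h` times.
-/

open Polynomial Finset

namespace Finset

variable {α β : Type*} [DecidableEq β]

theorem card_image_eq_and_card_fiber_eq_of_card_eq_mul {s : Finset α} {φ : α → β} {m n : ℕ}
    (hn : 0 < n) (hs : #s = m * n) (himage : #(s.image φ) ≤ m)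
    (hfiber : ∀ y, #{x ∈ s | φ x = y} ≤ n) :
    #(s.image φ) = m ∧ ∀ y ∈ s.image φ, #{x ∈ s | φ x = y} = n := by
  have hm : #(s.image φ) = m := by
    refine le_antisymm himage (Nat.le_of_mul_le_mul_right ?_ hn)
    calc m * n = #s := hs.symm
      _ ≤ n * #(s.image φ) := card_le_mul_card_image s n fun y _ ↦ hfiber y
      _ = #(s.image φ) * n := mul_comm _ _
  refine ⟨hm, (sum_eq_sum_iff_of_le fun y _ ↦ hfiber y).1 ?_⟩
  rw [← card_eq_sum_card_image, sum_const, hm, smul_eq_mul, hs]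

variable [DecidableEq α]

theorem exists_partition_fibers {s : Finset α} {φ : α → β} {m n : ℕ}
    (himage : #(s.image φ) = m) (hfiber : ∀ y ∈ s.image φ, #{x ∈ s | φ x = y} = n) :
    ∃ (B : Fin m → Finset α) (c : Fin m → β),
      (∀ i j : Fin m, i ≠ j → Disjoint (B i) (B j)) ∧
      (univ.biUnion B = s) ∧
      (∀ i, #(B i) = n) ∧
      (∀ i, ∀ x ∈ B i, φ x = c i) ∧
      Function.Injective c := by
  set e : Fin m ≃ s.image φ := ((s.image φ).equivFinOfCardEq himage).symm
  have hc : Function.Injective fun i ↦ (e i : β) := Subtype.val_injective.comp e.injective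
  refine ⟨fun i ↦ {x ∈ s | φ x = e i}, fun i ↦ e i, fun i j hij ↦ ?_, ?_,
    fun i ↦ hfiber _ (e i).2, fun i x hx ↦ (mem_filter.1 hx).2, hc⟩
  · exact disjoint_left.2 fun x hxi hxj ↦
      hij (hc ((mem_filter.1 hxi).2.symm.trans (mem_filter.1 hxj).2))
  · ext x
    simp only [mem_biUnion, mem_univ, mem_filter, true_and]
    refine ⟨fun ⟨_, hx, _⟩ ↦ hx, fun hx ↦ ?_⟩
    exact ⟨e.symm ⟨φ x, mem_image_of_mem φ hx⟩, hx, by simp⟩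

end Finset

namespace Polynomial

variable {R : Type*} [CommRing R] [IsDomain R]

theorem nodup_roots_of_squarefree {p : R[X]} (hp : Squarefree p) : p.roots.Nodup := by
  classical
  refine Multiset.nodup_iff_count_le_one.2 fun a ↦ ?_
  rw [count_roots]
  by_contra! hlt
  have hdvd : (X - C a) * (X - C a) ∣ p := by
    rw [← sq]
    exact (le_rootMultiplicity_iff hp.ne_zero).1 hlt
  exact not_isUnit_X_sub_C a (hp _ hdvd)

theorem card_roots_toFinset_of_splits_of_squarefree [DecidableEq R] {p : R[X]}
    (hsplit : p.Splits) (hp : Squarefree p) : #p.roots.toFinset = p.natDegree := by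
  rw [Multiset.toFinset_card_of_nodup (nodup_roots_of_squarefree hp),
    hsplit.natDegree_eq_card_roots]

theorem eval_mem_roots_of_mem_roots_comp {p q : R[X]} {x : R} (hx : x ∈ (p.comp q).roots) :
    q.eval x ∈ p.roots := by
  obtain ⟨hpq, hroot⟩ := mem_roots'.1 hx
  exact mem_roots'.2 ⟨fun hp ↦ hpq (by rw [hp, zero_comp]), by simpa [eval_comp] using hroot⟩

theorem card_image_eval_roots_comp_le [DecidableEq R] (p q : R[X]) :
    #((p.comp q).roots.toFinset.image fun x ↦ q.eval x) ≤ p.natDegree :=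
  calc #((p.comp q).roots.toFinset.image fun x ↦ q.eval x)
      ≤ #p.roots.toFinset := card_le_card fun _ hy ↦ by
        obtain ⟨x, hx, rfl⟩ := mem_image.1 hy
        exact Multiset.mem_toFinset.2
          (eval_mem_roots_of_mem_roots_comp (Multiset.mem_toFinset.1 hx))
    _ ≤ Multiset.card p.roots := Multiset.toFinset_card_le _
    _ ≤ p.natDegree := card_roots' p

theorem card_filter_eval_eq_le [DecidableEq R] {q : R[X]} (hq : 0 < q.natDegree) (s : Finset R)
    (y : R) : #{x ∈ s | q.eval x = y} ≤ q.natDegree := by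
  have hdeg : 0 < q.degree := natDegree_pos_iff_degree_pos.1 hq
  calc #{x ∈ s | q.eval x = y} ≤ #(q - C y).roots.toFinset := card_le_card fun x hx ↦
        Multiset.mem_toFinset.2 ((mem_roots_sub_C hdeg).2 (mem_filter.1 hx).2)
    _ ≤ Multiset.card (q - C y).roots := Multiset.toFinset_card_le _
    _ ≤ q.natDegree := card_roots_sub_C' hdeg

end Polynomial

theorem nest_partition_general {F : Type*} [Field F] [DecidableEq F]
    (f h : F[X]) (hh : 1 ≤ h.natDegree) (t₀ : F)
    (hsplit : (f.comp h - C t₀).Splits)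
    (hsep : Squarefree (f.comp h - C t₀)) :
    ∃ (B : Fin f.natDegree → Finset F) (c : Fin f.natDegree → F),
      (∀ i j : Fin f.natDegree, i ≠ j → Disjoint (B i) (B j)) ∧
      (Finset.univ.biUnion B = (f.comp h - C t₀).roots.toFinset) ∧
      (∀ i, (B i).card = h.natDegree) ∧
      (∀ i, ∀ x ∈ B i, h.eval x = c i) ∧
      Function.Injective c := by
  have hcomp : f.comp h - C t₀ = (f - C t₀).comp h := by rw [sub_comp, C_comp]
  have hcard : #(f.comp h - C t₀).roots.toFinset = f.natDegree * h.natDegree := by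
    rw [card_roots_toFinset_of_splits_of_squarefree hsplit hsep, natDegree_sub_C, natDegree_comp]
  have himage : #((f.comp h - C t₀).roots.toFinset.image fun x ↦ h.eval x) ≤ f.natDegree := by
    simpa only [hcomp, natDegree_sub_C] using card_image_eval_roots_comp_le (f - C t₀) h
  obtain ⟨himage_eq, hfiber⟩ := card_image_eq_and_card_fiber_eq_of_card_eq_mul hh hcard himage
    (card_filter_eval_eq_le hh _)
  exact exists_partition_fibers himage_eq hfiber

/-- If `f(h(X)) - t₀` splits into `(deg f)(deg h)` distinct linear factors
over `F`, then its root set can be partitioned into `deg f` sets `B i`, each of size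
`deg h`, on each of which `h` is constant with pairwise distinct values. -/
theorem nest_partition {F : Type*} [Field F] [DecidableEq F]
    (f h : F[X]) (hf : 1 ≤ f.natDegree) (hh : 1 ≤ h.natDegree) (t₀ : F)
    (hsplit : (f.comp h - C t₀).Splits)
    (hsep : Squarefree (f.comp h - C t₀)) :
    ∃ (B : Fin f.natDegree → Finset F) (c : Fin f.natDegree → F),
      (∀ i j : Fin f.natDegree, i ≠ j → Disjoint (B i) (B j)) ∧
      (Finset.univ.biUnion B = (f.comp h - C t₀).roots.toFinset) ∧
      (∀ i, (B i).card = h.natDegree) ∧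
      (∀ i, ∀ x ∈ B i, h.eval x = c i) ∧
      Function.Injective c :=
  nest_partition_general f h hh t₀ hsplit hsep
end

section
/- Let f, h ∈ F_q[X] be non-constant and t₀ ∈ F_q. If f(h(X)) - t₀ splits into distinct linear factors over F_q, then f(X) - t₀ splits into deg f distinct linear factors over F_q. -/
open Polynomial

namespace Polynomial

section CommRing

variable {R : Type*} [CommRing R] [IsDomain R] {p h : R[X]}

theorem isUnit_of_isUnit_comp (hh : 0 < h.natDegree) (hp : IsUnit (p.comp h)) : IsUnit p := by
  have hdeg : p.natDegree * h.natDegree = 0 := by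
    rw [← natDegree_comp]
    exact natDegree_eq_zero_of_isUnit hp
  have hp0 : p.natDegree = 0 := (mul_eq_zero.mp hdeg).resolve_right hh.ne'
  rw [eq_C_of_natDegree_eq_zero hp0, C_comp] at hp
  rwa [eq_C_of_natDegree_eq_zero hp0]

theorem _root_.Squarefree.of_comp (hh : 0 < h.natDegree) (hp : Squarefree (p.comp h)) :
    Squarefree p := by
  rintro x ⟨c, rfl⟩
  exact isUnit_of_isUnit_comp hh (hp _ ⟨c.comp h, by rw [mul_comp, mul_comp]⟩)

theorem _root_.Squarefree.nodup_roots (hp : Squarefree p) : p.roots.Nodup := by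
  classical
  refine Multiset.nodup_iff_count_le_one.mpr fun a ↦ ?_
  rw [count_roots]
  by_contra! hmult
  have hdvd : (X - C a) * (X - C a) ∣ p := by
    rw [← pow_two]
    exact (pow_dvd_pow _ hmult).trans (pow_rootMultiplicity_dvd p a)
  exact not_isUnit_X_sub_C a (hp _ hdvd)

end CommRing

variable {K : Type*} [Field K] {p h : K[X]}

/- A root `x` of `q.comp h` gives the root `h.eval x` of `q`, so every irreducible factor `q` of `p`
has degree one. -/
theorem Splits.of_comp (hh : 0 < h.natDegree) (hp : (p.comp h).Splits) : p.Splits := by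
  induction p using WfDvdMonoid.induction_on_irreducible with
  | zero => exact Splits.zero
  | unit u hu => exact hu.splits
  | mul a q ha hq ih =>
    have hqa : (q * a).comp h ≠ 0 := by
      rw [Ne, comp_eq_zero_iff, not_or, not_and_or]
      exact ⟨mul_ne_zero hq.ne_zero ha, .inr fun hC ↦ hh.ne' (by rw [hC, natDegree_C])⟩
    rw [mul_comp] at hp hqa
    have hqh : (q.comp h).Splits := hp.of_dvd hqa (dvd_mul_right _ _)
    have hdeg : (q.comp h).degree ≠ 0 := by
      rw [degree_eq_natDegree (left_ne_zero_of_mul hqa), natDegree_comp]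
      exact_mod_cast (Nat.mul_pos hq.natDegree_pos hh).ne'
    obtain ⟨x, hx⟩ := hqh.exists_eval_eq_zero hdeg
    rw [eval_comp] at hx
    exact (Splits.of_degree_eq_one (degree_eq_one_of_irreducible_of_root hq hx)).mul
      (ih (hp.of_dvd hqa (dvd_mul_left _ _)))

end Polynomial

theorem outer_splits_general {F : Type*} [Field F] [DecidableEq F]
    (f h : F[X]) (hh : 1 ≤ h.natDegree) (t₀ : F)
    (hsplit : ((f.comp h - C t₀).map (RingHom.id F)).Splits)
    (hsep : Squarefree (f.comp h - C t₀)) :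
    ((f - C t₀).map (RingHom.id F)).Splits ∧ Squarefree (f - C t₀) ∧
      (f - C t₀).roots.toFinset.card = f.natDegree := by
  have hcomp : (f - C t₀).comp h = f.comp h - C t₀ := by rw [sub_comp, C_comp]
  rw [map_id] at hsplit ⊢
  rw [← hcomp] at hsplit hsep
  have hsplits : (f - C t₀).Splits := hsplit.of_comp hh
  have hsqfree : Squarefree (f - C t₀) := hsep.of_comp hh
  refine ⟨hsplits, hsqfree, ?_⟩
  rw [Multiset.toFinset_card_of_nodup hsqfree.nodup_roots, ← hsplits.natDegree_eq_card_roots,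
    natDegree_sub_C]

/-- If `f(h(X)) - t₀` splits into distinct linear factors over `F`, then
`f(X) - t₀` splits into `deg f` distinct linear factors over `F`. -/
theorem outer_splits {F : Type*} [Field F] [DecidableEq F]
    (f h : F[X]) (hf : 1 ≤ f.natDegree) (hh : 1 ≤ h.natDegree) (t₀ : F)
    (hsplit : ((f.comp h - C t₀).map (RingHom.id F)).Splits)
    (hsep : Squarefree (f.comp h - C t₀)) :
    ((f - C t₀).map (RingHom.id F)).Splits ∧ Squarefree (f - C t₀) ∧
      (f - C t₀).roots.toFinset.card = f.natDegree :=
  outer_splits_general f h hh t₀ hsplit hsep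
end

section
/- Let C = {(m(x))_{x ∈ A} : m ∈ M} be the evaluation code of the message space M on an evaluation set A ⊆ F_q of size n = (deg f)(deg h)·ℓ with ℓ ≥ 1. Then the minimum distance of C satisfies d ≥ n - ((s+1)(deg f)(deg h) - λ - 1), provided n > (s+1)(deg f)(deg h) - λ - 1. -/
open Polynomial

/-- `m` is a message polynomial of the nested construction. -/
def IsNestedMsg {F : Type*} [Field F] (f h : F[X]) (lam s : ℕ) (m : F[X]) : Prop :=
  ∃ (g : Fin (s + 1) → Fin (f.natDegree - 1) → F[X]) (gt : Fin (s + 1) → F[X]),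
    (∀ i j, (g i j).natDegree ≤ h.natDegree - 2) ∧
    (∀ i, (gt i).natDegree ≤ h.natDegree - lam - 1) ∧
    m = ∑ i : Fin (s + 1),
      ((∑ j : Fin (f.natDegree - 1), g i j * h ^ (j : ℕ)) + gt i * h ^ (f.natDegree - 1))
        * (f.comp h) ^ (i : ℕ)

/-- The evaluation code of the nested message space on a set `A` of
`n = (deg f)(deg h)·ℓ` distinct points of `F` has minimum distance at least
`n - ((s+1)(deg f)(deg h) - λ - 1)`: every codeword whose evaluation vector is nonzero
has Hamming weight at least that quantity. -/
theorem nested_code_min_distance {F : Type*} [Field F] [Fintype F] [DecidableEq F]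
    (f h : F[X]) (hh : 3 ≤ h.natDegree) (hf : 2 ≤ f.natDegree)
    (lam s ℓ n : ℕ) (hlam2 : 2 ≤ lam) (hlam : lam ≤ h.natDegree - 1) (hℓ : 1 ≤ ℓ)
    (A : Finset F) (hA : A.card = n) (hn : n = f.natDegree * h.natDegree * ℓ)
    (hbig : (s + 1) * (f.natDegree * h.natDegree) - lam - 1 < n)
    (m : F[X]) (hm : IsNestedMsg f h lam s m)
    (hnz : ∃ x ∈ A, m.eval x ≠ 0) :
    n - ((s + 1) * (f.natDegree * h.natDegree) - lam - 1)
      ≤ (A.filter (fun x => m.eval x ≠ 0)).card := by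
  set D := f.natDegree * h.natDegree with hD
  -- degree bound on m
  have hdeg : m.natDegree ≤ (s + 1) * D - lam - 1 := by
    obtain ⟨g, gt, hg, hgt, rfl⟩ := hm
    refine Polynomial.natDegree_sum_le_of_forall_le _ _ (fun i _ => ?_)
    refine le_trans (natDegree_mul_le) ?_
    have hbr : ((∑ j : Fin (f.natDegree - 1), g i j * h ^ (j : ℕ)) +
        gt i * h ^ (f.natDegree - 1)).natDegree ≤ D - lam - 1 := by
      refine le_trans (natDegree_add_le _ _) (max_le ?_ ?_)
      · refine Polynomial.natDegree_sum_le_of_forall_le _ _ (fun j _ => ?_)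
        refine le_trans (natDegree_mul_le) ?_
        have h1 := hg i j
        have h2 : (h ^ (j : ℕ)).natDegree ≤ (j : ℕ) * h.natDegree :=
          natDegree_pow_le
        have hj : (j : ℕ) ≤ f.natDegree - 2 := by
          have := j.isLt; omega
        have hjd : (j : ℕ) * h.natDegree ≤ (f.natDegree - 2) * h.natDegree :=
          Nat.mul_le_mul_right _ hj
        have hE : (f.natDegree - 2) * h.natDegree + 2 * h.natDegree = D := by
          rw [hD, ← Nat.add_mul]; congr 1; omega
        omega
      · refine le_trans (natDegree_mul_le) ?_
        have h1 := hgt i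
        have h2 : (h ^ (f.natDegree - 1)).natDegree ≤ (f.natDegree - 1) * h.natDegree :=
          natDegree_pow_le
        have hE : (f.natDegree - 1) * h.natDegree + h.natDegree = D := by
          rw [hD, ← Nat.succ_mul]; congr 1; omega
        omega
    have hpow : ((f.comp h) ^ (i : ℕ)).natDegree ≤ (i : ℕ) * D := by
      refine le_trans natDegree_pow_le ?_
      exact Nat.mul_le_mul_left _ (by rw [natDegree_comp])
    have hi : (i : ℕ) ≤ s := by have := i.isLt; omega
    have hid : (i : ℕ) * D ≤ s * D := Nat.mul_le_mul_right _ hi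
    have hsd : (s + 1) * D = s * D + D := by ring
    have hla : lam + 1 ≤ D := by
      have : h.natDegree ≤ D := Nat.le_mul_of_pos_left _ (by omega)
      omega
    omega
  -- m ≠ 0
  obtain ⟨x, hx, hxne⟩ := hnz
  have hm0 : m ≠ 0 := fun h0 => hxne (by simp [h0])
  classical
  -- zeros of m in A
  have hsub : A.filter (fun x => m.eval x = 0) ⊆ m.roots.toFinset := by
    intro y hy
    simp only [Finset.mem_filter] at hy
    simp [Multiset.mem_toFinset, mem_roots, hm0, IsRoot.def, hy.2]
  have hcz : (A.filter (fun x => m.eval x = 0)).card ≤ (s + 1) * D - lam - 1 := by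
    calc (A.filter (fun x => m.eval x = 0)).card ≤ m.roots.toFinset.card :=
          Finset.card_le_card hsub
      _ ≤ Multiset.card m.roots := m.roots.toFinset_card_le
      _ ≤ m.natDegree := m.card_roots'
      _ ≤ _ := hdeg
  have hsplit := Finset.card_filter_add_card_filter_not
    (s := A) (p := fun x => m.eval x = 0)
  have : (A.filter (fun x => ¬ m.eval x = 0)).card
      = A.card - (A.filter (fun x => m.eval x = 0)).card := by omega
  simp only [ne_eq]
  omega
end

section
/- In the nested construction with f, h ∈ F_q[X], deg h = b+1 ≥ 3, deg f = (a+λ)/(b+1), 2 ≤ λ ≤ b, and B a sub-nest (h constant on B, |B| = b+1, and f∘h constant on the nest containing B): every message polynomial m ∈ M restricted to B agrees with a polynomial of degree at most b-1. Consequently the value of m at any one point of B is determined by its values at the other b points of B (via Lagrange interpolation). -/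
open Polynomial

/-- On a sub-nest `B` (a set of `b+1 = deg h` points on which both `h` and
`f∘h` are constant), every message polynomial agrees with a polynomial of degree at most
`b - 1`; consequently its value at any point of `B` is determined by its values at the
other `b` points of `B`. -/
theorem subnest_locality {F : Type*} [Field F] [DecidableEq F]
    (f h : F[X]) (b lam s : ℕ)
    (hb : h.natDegree = b + 1) (hb2 : 3 ≤ h.natDegree) (hf : 2 ≤ f.natDegree)
    (hlam2 : 2 ≤ lam) (hlam : lam ≤ b)
    (B : Finset F) (hBcard : B.card = b + 1)
    (ch : F) (hch : ∀ x ∈ B, h.eval x = ch)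
    (cfh : F) (hcfh : ∀ x ∈ B, (f.comp h).eval x = cfh) :
    (∀ m : F[X], IsNestedMsg f h lam s m →
      ∃ P : F[X], P.natDegree ≤ b - 1 ∧ ∀ x ∈ B, m.eval x = P.eval x) ∧
    (∀ m m' : F[X], IsNestedMsg f h lam s m → IsNestedMsg f h lam s m' →
      ∀ x₀ ∈ B, (∀ x ∈ B, x ≠ x₀ → m.eval x = m'.eval x) →
        m.eval x₀ = m'.eval x₀) := by
  have key : ∀ m : F[X], IsNestedMsg f h lam s m →
      ∃ P : F[X], P.natDegree ≤ b - 1 ∧ ∀ x ∈ B, m.eval x = P.eval x := by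
    rintro m ⟨g, gt, hg, hgt, rfl⟩
    refine ⟨∑ i : Fin (s + 1),
      ((∑ j : Fin (f.natDegree - 1), g i j * C ch ^ (j : ℕ)) + gt i * C ch ^ (f.natDegree - 1))
        * C cfh ^ (i : ℕ), ?_, ?_⟩
    · refine (Polynomial.natDegree_sum_le _ _).trans ?_
      rw [Finset.fold_max_le]
      refine ⟨Nat.zero_le _, fun i _ => ?_⟩
      refine (natDegree_mul_le).trans ?_
      have h1 : (∑ j : Fin (f.natDegree - 1), g i j * C ch ^ (j : ℕ)).natDegree ≤ b - 1 := by
        refine (Polynomial.natDegree_sum_le _ _).trans ?_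
        rw [Finset.fold_max_le]
        refine ⟨Nat.zero_le _, fun j _ => ?_⟩
        refine (natDegree_mul_le).trans ?_
        have := hg i j
        rw [hb] at this
        rw [← C_pow, natDegree_C]
        omega
      have h2 : (gt i * C ch ^ (f.natDegree - 1)).natDegree ≤ b - 1 := by
        refine (natDegree_mul_le).trans ?_
        have := hgt i
        rw [hb] at this
        rw [← C_pow, natDegree_C]
        omega
      have h3 : (C cfh ^ (i : ℕ)).natDegree = 0 := by
        rw [← C_pow, natDegree_C]
      rw [h3, Nat.add_zero]
      exact (natDegree_add_le _ _).trans (max_le h1 h2)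
    · intro x hx
      simp [eval_finset_sum, hch x hx, hcfh x hx]
  refine ⟨key, fun m m' hm hm' x₀ hx₀ hag => ?_⟩
  obtain ⟨P, hP, hPe⟩ := key m hm
  obtain ⟨P', hP', hPe'⟩ := key m' hm'
  have hPP' : P - P' = 0 := by
    apply Polynomial.eq_zero_of_natDegree_lt_card_of_eval_eq_zero' _ (B.erase x₀)
    · intro x hx
      have hxB := Finset.mem_of_mem_erase hx
      have hne := Finset.ne_of_mem_erase hx
      simp [← hPe x hxB, ← hPe' x hxB, hag x hxB hne]
    · rw [Finset.card_erase_of_mem hx₀, hBcard]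
      have : P.natDegree - P'.natDegree ≤ b - 1 := by omega
      calc (P - P').natDegree ≤ max P.natDegree P'.natDegree := natDegree_sub_le _ _
        _ ≤ b - 1 := max_le hP hP'
        _ < b + 1 - 1 := by omega
  have : P.eval x₀ = P'.eval x₀ := by
    have := sub_eq_zero.mp hPP'  -- P = P'
    rw [this]
  rw [hPe x₀ hx₀, hPe' x₀ hx₀, this]
end

section
/- In the nested construction, let A be a nest (f∘h constant on A, |A| = (deg f)(deg h) = a+λ). Then every m ∈ M restricted to A agrees with a polynomial of degree at most a-1 = (deg f)(deg h) - λ - 1. Consequently the values of m on A are determined by its values at any a points of A. -/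
open Polynomial

/-- On a nest `A` (a set of `a + λ = (deg f)(deg h)` points on which `f∘h`
is constant), every message polynomial agrees with a polynomial of degree at most
`a - 1 = (deg f)(deg h) - λ - 1`; consequently its values on `A` are determined by its
values at any `a` points of `A`. -/
theorem nest_locality {F : Type*} [Field F] [DecidableEq F]
    (f h : F[X]) (a b lam s : ℕ)
    (hb : h.natDegree = b + 1) (hb2 : 3 ≤ h.natDegree) (hf : 2 ≤ f.natDegree)
    (hlam2 : 2 ≤ lam) (hlam : lam ≤ b)
    (ha : (b + 1) * f.natDegree = a + lam)
    (A : Finset F) (hAcard : A.card = a + lam)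
    (cfh : F) (hcfh : ∀ x ∈ A, (f.comp h).eval x = cfh) :
    (∀ m : F[X], IsNestedMsg f h lam s m →
      ∃ P : F[X], P.natDegree ≤ a - 1 ∧ ∀ x ∈ A, m.eval x = P.eval x) ∧
    (∀ m m' : F[X], IsNestedMsg f h lam s m → IsNestedMsg f h lam s m' →
      ∀ S : Finset F, S ⊆ A → S.card = a → (∀ x ∈ S, m.eval x = m'.eval x) →
        ∀ x ∈ A, m.eval x = m'.eval x) := by
  have hd : f.natDegree = (f.natDegree - 2) + 2 := by omega
  set d2 := f.natDegree - 2 with hd2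
  have hk : (d2 * (b+1)) + 2*(b+1) = a + lam := by
    have := ha
    rw [hd] at this; ring_nf at this ⊢; omega
  have key : ∀ m : F[X], IsNestedMsg f h lam s m →
      ∃ P : F[X], P.natDegree ≤ a - 1 ∧ ∀ x ∈ A, m.eval x = P.eval x := by
    rintro m ⟨g, gt, hg, hgt, rfl⟩
    refine ⟨∑ i : Fin (s+1),
      ((∑ j : Fin (f.natDegree - 1), g i j * h ^ (j:ℕ)) + gt i * h ^ (f.natDegree - 1))
        * C cfh ^ (i:ℕ), ?_, ?_⟩
    · apply Polynomial.natDegree_sum_le_of_forall_le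
      intro i _
      refine (Polynomial.natDegree_mul_le).trans ?_
      have hC : (C cfh ^ (i:ℕ)).natDegree = 0 := by
        rw [← C_pow, natDegree_C]
      rw [hC, Nat.add_zero]
      refine (Polynomial.natDegree_add_le _ _).trans (max_le ?_ ?_)
      · apply Polynomial.natDegree_sum_le_of_forall_le
        intro j _
        refine (Polynomial.natDegree_mul_le).trans ?_
        have h1 : (g i j).natDegree ≤ b - 1 := by
          have := hg i j; omega
        have h2 : (h ^ (j:ℕ)).natDegree ≤ d2 * (b+1) := by
          rw [natDegree_pow, hb]
          have : (j:ℕ) ≤ d2 := by have := j.isLt; omega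
          exact Nat.mul_le_mul_right _ this
        omega
      · refine (Polynomial.natDegree_mul_le).trans ?_
        have h1 : (gt i).natDegree ≤ b - lam := by
          have := hgt i; omega
        have h2 : (h ^ (f.natDegree - 1)).natDegree = (d2+1) * (b+1) := by
          rw [natDegree_pow, hb]; congr 1; omega
        have h3 : (d2+1)*(b+1) = d2*(b+1) + (b+1) := by ring
        have := Nat.add_le_add h1 h2.le
        omega
    · intro x hx
      simp only [eval_finset_sum, eval_mul, eval_add, eval_pow, eval_C, hcfh x hx]
  refine ⟨key, ?_⟩
  intro m m' hm hm' S hSA hScard hSeq x hx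
  obtain ⟨P, hP, hPe⟩ := key m hm
  obtain ⟨P', hP', hPe'⟩ := key m' hm'
  have ha1 : 1 ≤ a := by omega
  have hzero : P - P' = 0 := by
    apply Polynomial.eq_zero_of_natDegree_lt_card_of_eval_eq_zero' _ S
    · intro y hy
      have hyA := hSA hy
      simp [eval_sub, ← hPe y hyA, ← hPe' y hyA, hSeq y hy]
    · rw [hScard]
      calc (P - P').natDegree ≤ max P.natDegree P'.natDegree := natDegree_sub_le _ _
        _ < a := by omega
  rw [hPe x hx, hPe' x hx, sub_eq_zero.mp hzero]
end

section
/- Let deg f ≥ 2, deg h = b+1 ≥ 3, 2 ≤ λ ≤ deg h - 1 = b, s ≥ 0, k = (s+1)((deg f - 1)(deg h - 1) + deg h - λ), a+λ = (deg f)(deg h), and ρ = b(a+λ)/(b+1) - (λ-1). Then ⌊(k-1)/ρ⌋ = s and k₁ := k - 1 - sρ = deg f·(deg h - 1) - λ, with 0 ≤ k₁ < ρ. -/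
/-- With `deg f ≥ 2`, `deg h = b+1 ≥ 3`, `2 ≤ λ ≤ b`, `s ≥ 0`,
`k = (s+1)((deg f - 1)(deg h - 1) + deg h - λ)`, `a + λ = (deg f)(deg h)` and
`ρ = b(a+λ)/(b+1) - (λ-1)`: one has `⌊(k-1)/ρ⌋ = s` and
`k₁ = k - 1 - sρ = deg f (deg h - 1) - λ` with `0 ≤ k₁ < ρ`. -/
theorem hlrc_floor_identities (df dh a b lam s k rho : ℕ)
    (hf : 2 ≤ df) (hdh : dh = b + 1) (hdh3 : 3 ≤ dh)
    (hlam2 : 2 ≤ lam) (hlam : lam ≤ b)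
    (ha : a + lam = df * dh)
    (hrho : rho = b * (a + lam) / (b + 1) - (lam - 1))
    (hk : k = (s + 1) * ((df - 1) * (dh - 1) + dh - lam)) :
    (k - 1) / rho = s ∧
      (k - 1) % rho = df * (dh - 1) - lam ∧
      k - 1 - s * rho = df * (dh - 1) - lam ∧
      (k - 1) % rho < rho := by
  subst hdh
  have hb : 2 ≤ b := by omega
  have hbd : b ≤ df * b := Nat.le_mul_of_pos_left b (by omega)
  have hbd2 : 2 * b ≤ df * b := Nat.mul_le_mul_right b hf
  have hrho' : rho = df * b + 1 - lam := by
    rw [hrho, ha]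
    have h1 : b * (df * (b + 1)) = (b * df) * (b + 1) := by ring
    rw [h1, Nat.mul_div_cancel _ (by omega : 0 < b + 1)]
    have h2 : b * df = df * b := mul_comm b df
    have : lam ≤ b * df := by omega
    omega
  have hsub : (df - 1) * b = df * b - b := by
    rw [Nat.sub_mul, one_mul]
  have hinner : (df - 1) * ((b + 1) - 1) + (b + 1) - lam = rho := by
    simp only [Nat.add_sub_cancel]
    omega
  have hk' : k = (s + 1) * rho := by rw [hk, hinner]
  have hrho2 : 2 ≤ rho := by omega
  have hkm : k - 1 = (rho - 1) + s * rho := by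
    rw [hk']; ring_nf; omega
  have htarget : df * ((b + 1) - 1) - lam = rho - 1 := by
    simp only [Nat.add_sub_cancel]
    omega
  rw [hkm, htarget]
  refine ⟨?_, ?_, ?_, ?_⟩
  · rw [Nat.add_mul_div_right _ _ (by omega : 0 < rho),
      Nat.div_eq_of_lt (by omega)]
    omega
  · rw [Nat.add_mul_mod_self_right, Nat.mod_eq_of_lt (by omega)]
  · omega
  · rw [Nat.add_mul_mod_self_right, Nat.mod_eq_of_lt (by omega)]
    omega
end

section
/- Let deg f ≥ 2, deg h = b+1 ≥ 3, 2 ≤ λ ≤ b, s ≥ 0, a + λ = (deg f)(deg h), ρ = b(a+λ)/(b+1) - (λ-1), k = (s+1)((deg f - 1)(deg h - 1) + deg h - λ), k₁ = deg f(deg h - 1) - λ. Then ((s+1)(deg f)(deg h) - λ - 1) - ( s·(a+λ) + k₁ + ⌊k₁/b⌋ ) = ⌈λ/(deg h - 1)⌉ - 1 = 0; i.e., the nested-construction code meets the hierarchical Singleton-type bound with equality. -/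
/-- With the parameters of the nested construction,
`δ - δ' = ⌈λ/(deg h - 1)⌉ - 1 = 0`, where `δ = (s+1)(deg f)(deg h) - λ - 1` and
`δ' = s(a+λ) + k₁ + ⌊k₁/b⌋`; i.e. the nested code meets the hierarchical Singleton-type
bound with equality. -/
theorem nested_code_optimal (df dh a b lam s rho k k1 : ℕ)
    (hf : 2 ≤ df) (hdh : dh = b + 1) (hdh3 : 3 ≤ dh)
    (hlam2 : 2 ≤ lam) (hlam : lam ≤ b)
    (ha : a + lam = df * dh)
    (hrho : rho = b * (a + lam) / (b + 1) - (lam - 1))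
    (hk : k = (s + 1) * ((df - 1) * (dh - 1) + dh - lam))
    (hk1 : k1 = df * (dh - 1) - lam) :
    (s + 1) * (df * dh) - lam - 1 = s * (a + lam) + k1 + k1 / b ∧
      ⌈(lam : ℚ) / ((dh : ℚ) - 1)⌉ = 1 := by
  subst hdh hk1
  simp only [Nat.add_sub_cancel] at *
  have hb : 2 ≤ b := by omega
  have hc : df * b = b * df := Nat.mul_comm _ _
  have e2 : df * (b + 1) = df * b + df := by ring
  have e3 : b ≤ df * b := Nat.le_mul_of_pos_left _ (by omega)
  have hsplit : df * b - lam = (b - lam) + b * (df - 1) := by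
    have h1 : b * (df - 1) = df * b - b := by
      rw [Nat.mul_sub_one]; omega
    omega
  have hdiv : (df * b - lam) / b = df - 1 := by
    rw [hsplit, Nat.add_mul_div_left _ _ (by omega : 0 < b),
      Nat.div_eq_of_lt (by omega)]
    omega
  constructor
  · rw [hdiv, ha]
    have e1 : (s + 1) * (df * (b + 1)) = s * (df * (b + 1)) + df * (b + 1) := by ring
    have e4 : b * (df - 1) = df * b - b := by rw [Nat.mul_sub_one]; omega
    omega
  · have hbQ : ((b : ℚ) + 1) - 1 = (b : ℚ) := by ring
    push_cast
    rw [hbQ]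
    rw [Int.ceil_eq_iff]
    have hb0 : (0 : ℚ) < (b : ℚ) := by positivity
    constructor
    · push_cast
      norm_num
      positivity
    · push_cast
      rw [div_le_one hb0]
      exact_mod_cast hlam
end
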